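/- Let V₀ > 0, s ∈ ℂⁿ, Z ∈ ℂ^{n×n}, ‖Z‖* := max_h ‖Z_{h•}‖₂, and suppose V₀² > 4‖Z‖*‖s‖₂. Then the equation f = −(1/V₀²)·diag(f+s)·Z·(conj(f)+conj(s)) has a unique solution f in the closed ball of radius 4‖Z‖*‖s‖₂²/V₀² around the origin. -/

import Mathlib

/-!
Write `B(u, w) = -(1/V₀²) diag(u) Z w̄`, which is biadditive and, by Cauchy–Schwarz row by row,
satisfies `‖B(u, w)‖ ≤ c ‖u‖ ‖w‖` with `c = ‖Z‖*/V₀²`; the equation is `f = B(f + s, f + s)`.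
On the ball of radius `r = 4c‖s‖²` we have `r ≤ ‖s‖`, hence `‖f + s‖ ≤ 2‖s‖`, so the map sends the
ball into itself, and the identity `B(x, x) - B(y, y) = B(x - y, x) + B(y, x - y)` makes it a
contraction there with constant `4c‖s‖ < 1`. Banach's fixed point theorem concludes.
-/

open scoped ComplexConjugate NNReal

open Set Function in
theorem existsUnique_isFixedPt_of_dist_le_mul {α : Type*} [MetricSpace α] {f : α → α}
    {s : Set α} {K : ℝ} (hK0 : 0 ≤ K) (hK : K < 1) (hsc : IsComplete s) (hne : s.Nonempty)
    (hsf : MapsTo f s s) (hf : ∀ x ∈ s, ∀ y ∈ s, dist (f x) (f y) ≤ K * dist x y) :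
    ∃! x, x ∈ s ∧ IsFixedPt f x := by
  lift K to ℝ≥0 using hK0
  have hcontr : ContractingWith K (hsf.restrict f s s) :=
    ⟨mod_cast hK, (LipschitzOnWith.of_dist_le_mul hf).mapsToRestrict hsf⟩
  obtain ⟨x, hxs⟩ := hne
  obtain ⟨y, hys, hy, -⟩ := hcontr.exists_fixedPoint' hsc hsf hxs (edist_ne_top _ _)
  refine ⟨y, ⟨hys, hy⟩, fun z ⟨hzs, hz⟩ => ?_⟩
  have hdist : dist z y ≤ K * dist z y := by simpa [hz.eq, hy.eq] using hf z hzs y hys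
  exact dist_le_zero.mp (by nlinarith [dist_nonneg (x := z) (y := y)])

theorem AddMonoidHom.map_diag_sub_map_diag {E F : Type*} [AddCommGroup E] [AddCommGroup F]
    (B : E →+ E →+ F) (x y : E) : B x x - B y y = B (x - y) x + B y (x - y) := by
  simp only [map_sub, AddMonoidHom.sub_apply]
  abel

section QuadraticFixedPoint

variable {E : Type*} [NormedAddCommGroup E] {c : ℝ} {s : E}

theorem norm_add_le_two_mul_of_norm_le (hs : 4 * c * ‖s‖ < 1) {f : E}
    (hf : ‖f‖ ≤ 4 * c * ‖s‖ ^ 2) : ‖f + s‖ ≤ 2 * ‖s‖ := by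
  have hr : 4 * c * ‖s‖ ^ 2 ≤ ‖s‖ := by nlinarith [norm_nonneg s]
  linarith [norm_add_le f s]

variable (B : E →+ E →+ E)

theorem norm_map_add_add_le (hc : 0 ≤ c) (hB : ∀ u w, ‖B u w‖ ≤ c * ‖u‖ * ‖w‖)
    (hs : 4 * c * ‖s‖ < 1) {f : E} (hf : ‖f‖ ≤ 4 * c * ‖s‖ ^ 2) :
    ‖B (f + s) (f + s)‖ ≤ 4 * c * ‖s‖ ^ 2 := by
  have hfs := norm_add_le_two_mul_of_norm_le hs hf
  calc ‖B (f + s) (f + s)‖ ≤ c * ‖f + s‖ * ‖f + s‖ := hB _ _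
    _ ≤ c * (2 * ‖s‖) * (2 * ‖s‖) := by gcongr
    _ = 4 * c * ‖s‖ ^ 2 := by ring

theorem dist_map_add_add_le (hc : 0 ≤ c) (hB : ∀ u w, ‖B u w‖ ≤ c * ‖u‖ * ‖w‖)
    (hs : 4 * c * ‖s‖ < 1) {f g : E} (hf : ‖f‖ ≤ 4 * c * ‖s‖ ^ 2)
    (hg : ‖g‖ ≤ 4 * c * ‖s‖ ^ 2) :
    dist (B (f + s) (f + s)) (B (g + s) (g + s)) ≤ 4 * c * ‖s‖ * dist f g := by
  have hfs := norm_add_le_two_mul_of_norm_le hs hf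
  have hgs := norm_add_le_two_mul_of_norm_le hs hg
  rw [dist_eq_norm, dist_eq_norm, B.map_diag_sub_map_diag, add_sub_add_right_eq_sub]
  calc ‖B (f - g) (f + s) + B (g + s) (f - g)‖
      ≤ c * ‖f - g‖ * ‖f + s‖ + c * ‖g + s‖ * ‖f - g‖ :=
        (norm_add_le _ _).trans (add_le_add (hB _ _) (hB _ _))
    _ ≤ c * ‖f - g‖ * (2 * ‖s‖) + c * (2 * ‖s‖) * ‖f - g‖ := by gcongr
    _ = 4 * c * ‖s‖ * ‖f - g‖ := by ring

theorem existsUnique_eq_map_add_add [CompleteSpace E] (hc : 0 ≤ c)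
    (hB : ∀ u w, ‖B u w‖ ≤ c * ‖u‖ * ‖w‖) (hs : 4 * c * ‖s‖ < 1) :
    ∃! f : E, ‖f‖ ≤ 4 * c * ‖s‖ ^ 2 ∧ f = B (f + s) (f + s) := by
  have hball : ∀ f : E, f ∈ Metric.closedBall 0 (4 * c * ‖s‖ ^ 2) ↔ ‖f‖ ≤ 4 * c * ‖s‖ ^ 2 :=
    fun f => mem_closedBall_zero_iff
  obtain ⟨f, ⟨hf, hfix⟩, huniq⟩ := existsUnique_isFixedPt_of_dist_le_mul
    (f := fun f => B (f + s) (f + s)) (by positivity) hs Metric.isClosed_closedBall.isComplete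
    (Metric.nonempty_closedBall.mpr (by positivity))
    (fun f hf => (hball _).mpr (norm_map_add_add_le B hc hB hs ((hball f).mp hf)))
    (fun f hf g hg => dist_map_add_add_le B hc hB hs ((hball f).mp hf) ((hball g).mp hg))
  exact ⟨f, ⟨(hball f).mp hf, hfix.symm⟩,
    fun g ⟨hg, hgfix⟩ => huniq g ⟨(hball g).mpr hg, hgfix.symm⟩⟩

end QuadraticFixedPoint

section PowerFlow

variable {ι : Type*} [Fintype ι]

theorem EuclideanSpace.norm_le_mul_norm_of_forall_norm_le {𝕜 : Type*} [RCLike 𝕜]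
    {u v : EuclideanSpace 𝕜 ι} {c : ℝ} (hc : 0 ≤ c) (h : ∀ i, ‖u i‖ ≤ c * ‖v i‖) :
    ‖u‖ ≤ c * ‖v‖ := by
  rw [EuclideanSpace.norm_eq, EuclideanSpace.norm_eq, ← Real.sqrt_sq hc,
    ← Real.sqrt_mul (sq_nonneg c), Finset.mul_sum]
  gcongr with i
  rw [← mul_pow]
  exact pow_le_pow_left₀ (norm_nonneg _) (h i) 2

theorem EuclideanSpace.norm_sum_mul_conj_le {𝕜 : Type*} [RCLike 𝕜] (a w : EuclideanSpace 𝕜 ι) :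
    ‖∑ k, a k * conj (w k)‖ ≤ ‖a‖ * ‖w‖ := by
  have hinner : inner 𝕜 w a = ∑ k, a k * conj (w k) := by
    simp [PiLp.inner_apply]
  rw [← hinner, mul_comm]
  exact norm_inner_le_norm w a

noncomputable def powerFlowForm (V₀ : ℝ) (Z : Matrix ι ι ℂ) :
    EuclideanSpace ℂ ι →+ EuclideanSpace ℂ ι →+ EuclideanSpace ℂ ι :=
  AddMonoidHom.mk' (fun u => AddMonoidHom.mk'
    (fun w => WithLp.toLp 2 fun i => -((V₀ : ℂ) ^ 2)⁻¹ * (u i * ∑ k, Z i k * conj (w k)))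
    (fun w w' => by ext i; simp [Finset.sum_add_distrib, mul_add]))
    (fun u u' => by ext w i; simp [add_mul, mul_add])

theorem powerFlowForm_apply (V₀ : ℝ) (Z : Matrix ι ι ℂ) (u w : EuclideanSpace ℂ ι) (i : ι) :
    powerFlowForm V₀ Z u w i = -((V₀ : ℂ) ^ 2)⁻¹ * (u i * ∑ k, Z i k * conj (w k)) :=
  rfl

theorem norm_powerFlowForm_le (V₀ : ℝ) {Z : Matrix ι ι ℂ} {c : ℝ} (hc : 0 ≤ c)
    (hZ : ∀ i, ‖WithLp.toLp 2 (Z i)‖ ≤ c) (u w : EuclideanSpace ℂ ι) :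
    ‖powerFlowForm V₀ Z u w‖ ≤ c / V₀ ^ 2 * ‖u‖ * ‖w‖ := by
  rw [mul_right_comm]
  refine EuclideanSpace.norm_le_mul_norm_of_forall_norm_le (by positivity) fun i => ?_
  rw [powerFlowForm_apply, norm_mul, norm_mul, norm_neg, norm_inv, norm_pow, Complex.norm_real,
    Real.norm_eq_abs, sq_abs]
  calc (V₀ ^ 2)⁻¹ * (‖u i‖ * ‖∑ k, Z i k * conj (w k)‖)
      ≤ (V₀ ^ 2)⁻¹ * (‖u i‖ * (c * ‖w‖)) := by
        gcongr
        exact (EuclideanSpace.norm_sum_mul_conj_le (WithLp.toLp 2 (Z i)) w).trans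
          (mul_le_mul_of_nonneg_right (hZ i) (norm_nonneg w))
    _ = c / V₀ ^ 2 * ‖w‖ * ‖u i‖ := by ring

end PowerFlow

theorem stmt_10_general {n : ℕ} (V₀ : ℝ)
    (Z : Matrix (Fin n) (Fin n) ℂ) (s : EuclideanSpace ℂ (Fin n))
    (Zn : ℝ) (hZn : Zn = ⨆ h, ‖(WithLp.equiv 2 (Fin n → ℂ)).symm (Z h)‖)
    (hcond : V₀ ^ 2 > 4 * Zn * ‖s‖) :
    ∃! f : EuclideanSpace ℂ (Fin n),
      ‖f‖ ≤ 4 * Zn * ‖s‖ ^ 2 / V₀ ^ 2 ∧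
      f = (WithLp.equiv 2 (Fin n → ℂ)).symm (fun h =>
        -((V₀ : ℂ) ^ 2)⁻¹ * ((f h + s h) * ∑ k, Z h k * (conj (f k) + conj (s k)))) := by
  simp only [WithLp.equiv_symm_apply] at hZn ⊢
  have hZn0 : 0 ≤ Zn := hZn ▸ Real.iSup_nonneg fun h => norm_nonneg _
  have hrow : ∀ h, ‖WithLp.toLp 2 (Z h)‖ ≤ Zn := fun h =>
    hZn ▸ le_ciSup (f := fun h => ‖WithLp.toLp 2 (Z h)‖) (Finite.bddAbove_range _) h
  have hV : 0 < V₀ ^ 2 := lt_of_le_of_lt (by positivity) hcond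
  have hs : 4 * (Zn / V₀ ^ 2) * ‖s‖ < 1 := by
    rw [mul_div_assoc', div_mul_eq_mul_div, div_lt_one hV]
    exact hcond
  have hradius : 4 * (Zn / V₀ ^ 2) * ‖s‖ ^ 2 = 4 * Zn * ‖s‖ ^ 2 / V₀ ^ 2 := by ring
  have hmap : ∀ f, powerFlowForm V₀ Z (f + s) (f + s) = WithLp.toLp 2 fun h =>
      -((V₀ : ℂ) ^ 2)⁻¹ * ((f h + s h) * ∑ k, Z h k * (conj (f k) + conj (s k))) := fun f => by
    ext h
    rw [powerFlowForm_apply]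
    simp only [PiLp.add_apply, map_add]
  simpa only [hradius, hmap] using existsUnique_eq_map_add_add (powerFlowForm V₀ Z)
    (by positivity) (norm_powerFlowForm_le V₀ hZn0 hrow) hs

/-- Existence and uniqueness of the fixed point: if `V₀² > 4‖Z‖*‖s‖₂` then the equation
`f = −(1/V₀²) diag(f+s) Z (f̄+s̄)` has a unique solution with `‖f‖₂ ≤ 4‖Z‖*‖s‖₂²/V₀²`. -/
theorem stmt_10 {n : ℕ} (V₀ : ℝ) (hV : 0 < V₀)
    (Z : Matrix (Fin n) (Fin n) ℂ) (s : EuclideanSpace ℂ (Fin n))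
    (Zn : ℝ) (hZn : Zn = ⨆ h, ‖(WithLp.equiv 2 (Fin n → ℂ)).symm (Z h)‖)
    (hcond : V₀ ^ 2 > 4 * Zn * ‖s‖) :
    ∃! f : EuclideanSpace ℂ (Fin n),
      ‖f‖ ≤ 4 * Zn * ‖s‖ ^ 2 / V₀ ^ 2 ∧
      f = (WithLp.equiv 2 (Fin n → ℂ)).symm (fun h =>
        -((V₀ : ℂ) ^ 2)⁻¹ * ((f h + s h) * ∑ k, Z h k * (conj (f k) + conj (s k)))) :=
  stmt_10_general V₀ Z s Zn hZn hcond
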